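/- arXiv:1004.1101 — 3 statements merged into one kernel-verified Lean document; each statement's English description precedes it below -/
import Mathlib

section
/- Let n ≥ 1 and n < p < ∞. There exists a constant C, depending only on n and p, with the following property: for every x₀ ∈ ℝⁿ and R > 0, if u is continuous on the closed ball of center x₀ and radius R, twice continuously differentiable on B(x₀,R), vanishes on the boundary sphere {x : ‖x − x₀‖ = R}, and satisfies Δu = f pointwise on B(x₀,R) with f ∈ L^p(B(x₀,R)), then sup_{B(x₀,R)} |u| ≤ C R^{2 − n/p} ‖f‖_{L^p(B(x₀,R))}. -/
/-!
The Alexandrov–Bakelman–Pucci argument. Let `x` lie in the ball with `u x > 0`. For every `ξ`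
with `2R‖ξ‖ < u x`, the function `u - ⟪ξ, ·⟫` attains its maximum over the closed ball at an
interior point `y`, because on the sphere it equals `-⟪ξ, z⟫ < u x - ⟪ξ, x⟫`; at `y` we have
`∇u y = ξ` and `D²u y ≤ 0`. Hence the image under `∇u` of the contact set `{D²u ≤ 0}` contains
the ball of radius `u x / 2R`, and the area formula bounds the volume of that ball by
`∫ |det D²u|` over the contact set. A negative semidefinite symmetric operator satisfies
`|det| ≤ (-trace)^n`, so the integrand is at most `|Δu|^n = |f|^n`, and Hölder's inequality from
`Lⁿ` to `Lᵖ` on the ball produces the factor `R^(2 - n/p)`. Applying the same bound to `-u`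
controls `|u x|`.
-/

open MeasureTheory Metric Set

/-- The Laplacian of a function on Euclidean space, as the sum of second
partial derivatives in the coordinate directions. -/
noncomputable def lap {n : ℕ} (u : EuclideanSpace ℝ (Fin n) → ℝ)
    (x : EuclideanSpace ℝ (Fin n)) : ℝ :=
  ∑ i, fderiv ℝ (fun y => fderiv ℝ u y (EuclideanSpace.single i 1)) x
    (EuclideanSpace.single i 1)

open Filter Topology InnerProductSpace
open scoped ENNReal

theorem LinearMap.IsPositive.abs_det_le_trace_pow {E : Type*} [NormedAddCommGroup E]
    [InnerProductSpace ℝ E] [FiniteDimensional ℝ E] {T : E →ₗ[ℝ] E} (hT : T.IsPositive) :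
    |T.det| ≤ LinearMap.trace ℝ E T ^ Module.finrank ℝ E := by
  have hev := hT.nonneg_eigenvalues rfl
  rw [hT.isSymmetric.det_eq_prod_eigenvalues rfl, hT.isSymmetric.trace_eq_sum_eigenvalues rfl]
  simp only [RCLike.ofReal_real_eq_id, id_eq]
  calc |∏ i, hT.isSymmetric.eigenvalues rfl i| = ∏ i, hT.isSymmetric.eigenvalues rfl i :=
        abs_of_nonneg (Finset.prod_nonneg fun i _ => hev i)
    _ ≤ ∏ _i, ∑ j, hT.isSymmetric.eigenvalues rfl j :=
        Finset.prod_le_prod (fun i _ => hev i)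
          (fun i _ => Finset.single_le_sum (fun j _ => hev j) (Finset.mem_univ i))
    _ = _ := by simp

theorem IsLocalMax.nonpos_of_hasDerivAt_hasDerivAt {g g' : ℝ → ℝ} {a c : ℝ}
    (h : IsLocalMax g a) (hg : ∀ᶠ t in 𝓝 a, HasDerivAt g (g' t) t) (hg' : HasDerivAt g' c a) :
    c ≤ 0 := by
  by_contra! hc
  have hg'a : g' a = 0 := h.hasDerivAt_eq_zero hg.self_of_nhds
  have hpos : ∀ᶠ t in 𝓝[>] a, 0 < g' t := by
    have hslope := (hasDerivAt_iff_tendsto_slope.1 hg').eventually (eventually_gt_nhds hc)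
    filter_upwards [nhdsWithin_mono a (fun t ht => ne_of_gt ht) hslope, self_mem_nhdsWithin]
      with t hs ht
    rw [slope_def_field, hg'a, sub_zero] at hs
    exact (div_pos_iff_of_pos_right (sub_pos.2 ht)).1 hs
  obtain ⟨b, hab : a < b, hb⟩ := mem_nhdsGT_iff_exists_Ioo_subset.1
    (((hg.and h).filter_mono nhdsWithin_le_nhds).and hpos)
  obtain ⟨m, ham, hmb⟩ := exists_between hab
  have hIoo : Ioo a m ⊆ Ioo a b := Ioo_subset_Ioo_right hmb.le
  obtain ⟨t, ht, hslope⟩ := exists_hasDerivAt_eq_slope g g' ham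
    (fun s hs => by
      rcases eq_or_lt_of_le hs.1 with rfl | has
      · exact hg.self_of_nhds.continuousAt.continuousWithinAt
      · exact (hb ⟨has, hs.2.trans_lt hmb⟩).1.1.continuousAt.continuousWithinAt)
    (fun s hs => (hb (hIoo hs)).1.1)
  have hgm : g m ≤ g a := (hb ⟨ham, hmb⟩).1.2
  have := (hb (hIoo ht)).2
  rw [hslope, div_pos_iff_of_pos_right (sub_pos.2 ham)] at this
  linarith

theorem IsLocalMax.fderiv_fderiv_apply_self_nonpos {E : Type*} [NormedAddCommGroup E]
    [NormedSpace ℝ E] {φ : E → ℝ} {x : E} (h : IsLocalMax φ x)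
    (hd : ∀ᶠ y in 𝓝 x, DifferentiableAt ℝ φ y) (hd2 : DifferentiableAt ℝ (fderiv ℝ φ) x)
    (v : E) : fderiv ℝ (fderiv ℝ φ) x v v ≤ 0 := by
  set ℓ : ℝ → E := fun t => x + t • v
  have hℓ (t : ℝ) : HasDerivAt ℓ v t := by
    simpa [ℓ] using ((hasDerivAt_id t).smul_const v).const_add x
  have hℓ0 : ℓ 0 = x := by simp [ℓ]
  have hℓx : Tendsto ℓ (𝓝 0) (𝓝 x) := hℓ0 ▸ (hℓ 0).continuousAt.tendsto
  refine IsLocalMax.nonpos_of_hasDerivAt_hasDerivAt (g := φ ∘ ℓ)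
    (g' := fun t => fderiv ℝ φ (ℓ t) v) (a := 0) ?_ ?_ ?_
  · exact (hℓ0 ▸ h).comp_continuous (hℓ 0).continuousAt
  · filter_upwards [hℓx.eventually hd] with t ht
    exact ht.hasFDerivAt.comp_hasDerivAt t (hℓ t)
  · have h2 : HasFDerivAt (fderiv ℝ φ) (fderiv ℝ (fderiv ℝ φ) x) (ℓ 0) :=
      hℓ0 ▸ hd2.hasFDerivAt
    exact (ContinuousLinearMap.apply ℝ ℝ v).hasFDerivAt.comp_hasDerivAt 0
      (h2.comp_hasDerivAt 0 (hℓ 0))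

section Hessian

variable {E : Type*} [NormedAddCommGroup E] [InnerProductSpace ℝ E] [CompleteSpace E]
  {u : E → ℝ} {y : E}

theorem ContDiffAt.hasFDerivAt_gradient (hu : ContDiffAt ℝ 2 u y) :
    HasFDerivAt (gradient u)
      ((toDual ℝ E).symm.toLinearIsometry.toContinuousLinearMap ∘L fderiv ℝ (fderiv ℝ u) y) y :=
  (toDual ℝ E).symm.toLinearIsometry.toContinuousLinearMap.hasFDerivAt.comp y
    ((hu.fderiv_right le_rfl).differentiableAt one_ne_zero).hasFDerivAt

theorem ContDiffAt.inner_fderiv_gradient_apply (hu : ContDiffAt ℝ 2 u y) (v w : E) :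
    ⟪fderiv ℝ (gradient u) y v, w⟫_ℝ = fderiv ℝ (fderiv ℝ u) y v w := by
  rw [hu.hasFDerivAt_gradient.fderiv]
  exact toDual_symm_apply

theorem ContDiffAt.isSymmetric_fderiv_gradient (hu : ContDiffAt ℝ 2 u y) :
    (fderiv ℝ (gradient u) y : E →ₗ[ℝ] E).IsSymmetric := fun v w => by
  rw [ContinuousLinearMap.coe_coe, real_inner_comm _ v, hu.inner_fderiv_gradient_apply,
    hu.inner_fderiv_gradient_apply, (hu.isSymmSndFDerivAt (by simp)).eq]

theorem ContDiffAt.isPositive_neg_fderiv_gradient (hu : ContDiffAt ℝ 2 u y)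
    (hneg : ∀ v, fderiv ℝ (fderiv ℝ u) y v v ≤ 0) :
    (-(fderiv ℝ (gradient u) y : E →ₗ[ℝ] E)).IsPositive := by
  refine ⟨fun v w => ?_, fun v => ?_⟩
  · simp only [LinearMap.neg_apply, inner_neg_left, inner_neg_right,
      hu.isSymmetric_fderiv_gradient v w]
  simp only [LinearMap.neg_apply, ContinuousLinearMap.coe_coe, inner_neg_left,
    hu.inner_fderiv_gradient_apply, RCLike.re_to_real]
  linarith [hneg v]

end Hessian

section LocalMax

variable {E : Type*} [NormedAddCommGroup E] [InnerProductSpace ℝ E] {u : E → ℝ} {ξ y : E}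

theorem IsLocalMax.gradient_eq_of_sub_inner [CompleteSpace E]
    (h : IsLocalMax (fun z => u z - ⟪ξ, z⟫_ℝ) y) (hu : DifferentiableAt ℝ u y) :
    gradient u y = ξ := by
  have hφ := hu.hasFDerivAt.sub (innerSL ℝ ξ).hasFDerivAt
  have h0 : fderiv ℝ u y - innerSL ℝ ξ = 0 := hφ.fderiv ▸ h.fderiv_eq_zero
  rw [gradient, sub_eq_zero.1 h0]
  exact (toDual ℝ E).symm_apply_apply ξ

theorem IsLocalMax.fderiv_fderiv_apply_self_nonpos_of_sub_inner
    (h : IsLocalMax (fun z => u z - ⟪ξ, z⟫_ℝ) y) (hu : ContDiffAt ℝ 2 u y) (v : E) :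
    fderiv ℝ (fderiv ℝ u) y v v ≤ 0 := by
  have hdiff : ∀ᶠ z in 𝓝 y, DifferentiableAt ℝ u z :=
    hu.eventually (by simp) |>.mono fun z hz => hz.differentiableAt two_ne_zero
  have hfd : fderiv ℝ (fun z => u z - ⟪ξ, z⟫_ℝ) =ᶠ[𝓝 y] fun z => fderiv ℝ u z - innerSL ℝ ξ :=
    hdiff.mono fun z hz => (hz.hasFDerivAt.sub (innerSL ℝ ξ).hasFDerivAt).fderiv
  have hd2 : DifferentiableAt ℝ (fderiv ℝ u) y :=
    (hu.fderiv_right le_rfl).differentiableAt one_ne_zero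
  have key := h.fderiv_fderiv_apply_self_nonpos
    (hdiff.mono fun z hz => hz.sub (innerSL ℝ ξ).differentiableAt)
    ((hd2.sub_const _).congr_of_eventuallyEq hfd) v
  rwa [hfd.fderiv_eq, fderiv_sub_const] at key

end LocalMax

theorem exists_mem_ball_isLocalMax_sub_inner {E : Type*} [NormedAddCommGroup E]
    [InnerProductSpace ℝ E] [ProperSpace E] {u : E → ℝ} {x₀ x ξ : E} {R : ℝ}
    (hcont : ContinuousOn u (closedBall x₀ R)) (hbd : ∀ z, ‖z - x₀‖ = R → u z = 0)
    (hx : x ∈ closedBall x₀ R) (hξ : 2 * R * ‖ξ‖ < u x) :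
    ∃ y ∈ ball x₀ R, IsLocalMax (fun z => u z - ⟪ξ, z⟫_ℝ) y := by
  set φ : E → ℝ := fun z => u z - ⟪ξ, z⟫_ℝ
  have hφ : ContinuousOn φ (closedBall x₀ R) := hcont.sub (by fun_prop)
  obtain ⟨y, hy, hmax⟩ := (isCompact_closedBall x₀ R).exists_isMaxOn ⟨x, hx⟩ hφ
  have hy' : y ∈ ball x₀ R := by
    refine lt_of_le_of_ne (mem_closedBall.1 hy) fun hyR => ?_
    have hxy : ‖x - y‖ ≤ 2 * R := by
      rw [← dist_eq_norm]
      linarith [dist_triangle_right x y x₀, mem_closedBall.1 hx, mem_closedBall.1 hy]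
    have hux : u x ≤ ⟪ξ, x - y⟫_ℝ := by
      have : φ x ≤ φ y := hmax hx
      simp only [φ, hbd y (by rwa [← dist_eq_norm]), inner_sub_right] at this ⊢
      linarith
    nlinarith [real_inner_le_norm ξ (x - y), norm_nonneg ξ]
  exact ⟨y, hy', hmax.isLocalMax (closedBall_mem_nhds_of_mem hy')⟩

theorem ball_subset_image_gradient {E : Type*} [NormedAddCommGroup E] [InnerProductSpace ℝ E]
    [ProperSpace E] {u : E → ℝ} {x₀ x : E} {R : ℝ} (hR : 0 < R)
    (hcont : ContinuousOn u (closedBall x₀ R)) (hu : ContDiffOn ℝ 2 u (ball x₀ R))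
    (hbd : ∀ z, ‖z - x₀‖ = R → u z = 0) (hx : x ∈ closedBall x₀ R) :
    ball (0 : E) (u x / (2 * R)) ⊆
      gradient u '' {y ∈ ball x₀ R | ∀ v, fderiv ℝ (fderiv ℝ u) y v v ≤ 0} := by
  intro ξ hξ
  rw [mem_ball_zero_iff, lt_div_iff₀ (by positivity)] at hξ
  obtain ⟨y, hy, hmax⟩ := exists_mem_ball_isLocalMax_sub_inner hcont hbd hx (by linarith)
  have hu2 : ContDiffAt ℝ 2 u y := hu.contDiffAt (isOpen_ball.mem_nhds hy)
  exact ⟨y, ⟨hy, hmax.fderiv_fderiv_apply_self_nonpos_of_sub_inner hu2⟩,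
    hmax.gradient_eq_of_sub_inner (hu2.differentiableAt two_ne_zero)⟩

theorem setLIntegral_enorm_pow_le {α : Type*} [MeasurableSpace α] {μ : Measure α} {s : Set α}
    {f : α → ℝ} {n : ℕ} {p : ℝ} (hn : n ≠ 0) (hnp : (n : ℝ) ≤ p) (hs : μ s ≠ ⊤)
    (hf : AEStronglyMeasurable f (μ.restrict s)) (hint : IntegrableOn (fun x => |f x| ^ p) s μ) :
    ∫⁻ x in s, ‖f x‖ₑ ^ n ∂μ ≤ ENNReal.ofReal
      (((∫ x in s, |f x| ^ p ∂μ) ^ (1 / p) * (μ s).toReal ^ ((1 : ℝ) / n - 1 / p)) ^ n) := by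
  have hp : 0 < p := lt_of_lt_of_le (by positivity) hnp
  have hmem : MemLp f (ENNReal.ofReal p) (μ.restrict s) := by
    refine (integrable_norm_rpow_iff hf (by simpa using hp) ENNReal.ofReal_ne_top).1 ?_
    simp only [Real.norm_eq_abs, ENNReal.toReal_ofReal hp.le]
    exact hint
  have hpow : eLpNorm f n (μ.restrict s) ^ n = ∫⁻ x in s, ‖f x‖ₑ ^ n ∂μ := by
    simpa using eLpNorm_nnreal_pow_eq_lintegral (f := f) (μ := μ.restrict s) (p := n)
      (by exact_mod_cast hn)
  have hHolder := eLpNorm_le_eLpNorm_mul_rpow_measure_univ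
    (show (n : ℝ≥0∞) ≤ ENNReal.ofReal p by simpa using ENNReal.ofReal_le_ofReal hnp) hf
  rw [hmem.eLpNorm_eq_integral_rpow_norm (by simpa using hp) ENNReal.ofReal_ne_top,
    Measure.restrict_apply_univ, ← ENNReal.ofReal_toReal hs] at hHolder
  simp only [Real.norm_eq_abs, ENNReal.toReal_ofReal hp.le, ENNReal.toReal_natCast,
    inv_eq_one_div] at hHolder
  rw [ENNReal.ofReal_rpow_of_nonneg ENNReal.toReal_nonneg
      (sub_nonneg.2 (one_div_le_one_div_of_le (by positivity) hnp)),
    ← ENNReal.ofReal_mul (by positivity)] at hHolder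
  rw [← hpow, ENNReal.ofReal_pow (by positivity)]
  gcongr

theorem le_of_div_pow_mul_le {n : ℕ} (hn : n ≠ 0) {M k R I p : ℝ} (hM : 0 ≤ M) (hk : 0 < k)
    (hR : 0 < R) (hI : 0 ≤ I)
    (h : (M / (2 * R)) ^ n * k ≤ (I ^ (1 / p) * (R ^ n * k) ^ ((1 : ℝ) / n - 1 / p)) ^ n) :
    M ≤ 2 * k ^ (-(1 / p)) * R ^ (2 - n / p) * I ^ (1 / p) := by
  set M₀ := 2 * k ^ (-(1 / p)) * R ^ (2 - n / p) * I ^ (1 / p) with hM₀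
  have hn' : (n : ℝ) ≠ 0 := by exact_mod_cast hn
  have hsplit :
      I ^ (1 / p) * (R ^ n * k) ^ ((1 : ℝ) / n - 1 / p) = M₀ / (2 * R) * k ^ (1 / n : ℝ) := by
    rw [hM₀, Real.mul_rpow (by positivity) hk.le, ← Real.rpow_natCast, ← Real.rpow_mul hR.le,
      sub_eq_add_neg, Real.rpow_add hk,
      show (2 : ℝ) - n / p = 1 + n * (1 / n + -(1 / p)) by field_simp; ring, Real.rpow_add hR,
      Real.rpow_one]
    field_simp
  rw [hsplit, mul_pow, ← Real.rpow_natCast (k ^ _), ← Real.rpow_mul hk.le, one_div_mul_cancel hn',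
    Real.rpow_one] at h
  have h' := (pow_le_pow_iff_left₀ (by positivity) (by positivity) hn).1
    (le_of_mul_le_mul_right h hk)
  exact (div_le_div_iff_of_pos_right (by positivity)).1 h'

section Euclidean

variable {n : ℕ} {u : EuclideanSpace ℝ (Fin n) → ℝ} {y : EuclideanSpace ℝ (Fin n)}

theorem lap_neg (u : EuclideanSpace ℝ (Fin n) → ℝ) (y : EuclideanSpace ℝ (Fin n)) :
    lap (fun z => -u z) y = -lap u y := by
  simp [lap, fderiv_fun_neg]

theorem measurable_lap (u : EuclideanSpace ℝ (Fin n) → ℝ) : Measurable (lap u) :=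
  Finset.measurable_sum _ fun _ _ => measurable_fderiv_apply_const ℝ _ _

theorem ContDiffAt.trace_fderiv_gradient (hu : ContDiffAt ℝ 2 u y) :
    LinearMap.trace ℝ _ (fderiv ℝ (gradient u) y).toLinearMap = lap u y := by
  rw [LinearMap.trace_eq_sum_inner _ (EuclideanSpace.basisFun (Fin n) ℝ), lap]
  refine Finset.sum_congr rfl fun i _ => ?_
  have hd : HasFDerivAt (fun z => fderiv ℝ u z (EuclideanSpace.single i 1)) _ y :=
    (ContinuousLinearMap.apply ℝ ℝ (EuclideanSpace.single i (1 : ℝ))).hasFDerivAt.comp y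
      ((hu.fderiv_right le_rfl).differentiableAt one_ne_zero).hasFDerivAt
  rw [EuclideanSpace.basisFun_apply, ContinuousLinearMap.coe_coe, real_inner_comm,
    hu.inner_fderiv_gradient_apply, hd.fderiv]
  rfl

theorem ContDiffAt.abs_det_fderiv_gradient_le (hu : ContDiffAt ℝ 2 u y)
    (hneg : ∀ v, fderiv ℝ (fderiv ℝ u) y v v ≤ 0) :
    |(fderiv ℝ (gradient u) y).det| ≤ |lap u y| ^ n := by
  have hpos := hu.isPositive_neg_fderiv_gradient hneg
  have htr : LinearMap.trace ℝ _ (-(fderiv ℝ (gradient u) y).toLinearMap) = -lap u y := by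
    rw [map_neg, hu.trace_fderiv_gradient]
  have hdet := hpos.abs_det_le_trace_pow
  rw [htr, finrank_euclideanSpace_fin, ← neg_one_smul ℝ (fderiv ℝ (gradient u) y).toLinearMap,
    LinearMap.det_smul, abs_mul, abs_pow, abs_neg, abs_one, one_pow, one_mul] at hdet
  exact hdet.trans (pow_le_pow_left₀ (htr ▸ hpos.trace_nonneg) (neg_le_abs _) n)

end Euclidean

section ABP

variable {n : ℕ} {u f : EuclideanSpace ℝ (Fin n) → ℝ} {x₀ x : EuclideanSpace ℝ (Fin n)} {R : ℝ}

theorem volume_ball_le_setLIntegral_enorm_pow (hR : 0 < R)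
    (hcont : ContinuousOn u (closedBall x₀ R)) (hu : ContDiffOn ℝ 2 u (ball x₀ R))
    (hbd : ∀ z, ‖z - x₀‖ = R → u z = 0) (hlap : ∀ y ∈ ball x₀ R, lap u y = f y)
    (hx : x ∈ closedBall x₀ R) :
    volume (ball (0 : EuclideanSpace ℝ (Fin n)) (u x / (2 * R))) ≤
      ∫⁻ y in ball x₀ R, ‖f y‖ₑ ^ n := by
  -- The contact set need not be measurable; `S` is a measurable superset on which the
  -- Jacobian bound still holds.
  set S := {y ∈ ball x₀ R | |(fderiv ℝ (gradient u) y).det| ≤ |lap u y| ^ n}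
  have hS : MeasurableSet S := measurableSet_ball.inter <| measurableSet_le
    (ContinuousLinearMap.continuous_det.measurable.comp (measurable_fderiv ℝ _)).abs
    ((measurable_lap u).abs.pow_const n)
  have hcontact : {y ∈ ball x₀ R | ∀ v, fderiv ℝ (fderiv ℝ u) y v v ≤ 0} ⊆ S :=
    fun y ⟨hy, hneg⟩ =>
      ⟨hy, (hu.contDiffAt (isOpen_ball.mem_nhds hy)).abs_det_fderiv_gradient_le hneg⟩
  calc volume (ball (0 : EuclideanSpace ℝ (Fin n)) (u x / (2 * R)))
      ≤ volume (gradient u '' S) :=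
        measure_mono ((ball_subset_image_gradient hR hcont hu hbd hx).trans (image_mono hcontact))
    _ ≤ ∫⁻ y in S, ENNReal.ofReal |(fderiv ℝ (gradient u) y).det| :=
        addHaar_image_le_lintegral_abs_det_fderiv volume hS fun y hy =>
          (hu.contDiffAt (isOpen_ball.mem_nhds hy.1)).hasFDerivAt_gradient.differentiableAt
            |>.hasFDerivAt.hasFDerivWithinAt
    _ ≤ ∫⁻ y in S, ‖f y‖ₑ ^ n := setLIntegral_mono' hS fun y hy => by
        rw [← hlap y hy.1, Real.enorm_eq_ofReal_abs, ← ENNReal.ofReal_pow (abs_nonneg _)]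
        exact ENNReal.ofReal_le_ofReal hy.2
    _ ≤ ∫⁻ y in ball x₀ R, ‖f y‖ₑ ^ n := lintegral_mono_set (sep_subset _ _)

theorem volume_ball_abs_le_setLIntegral_enorm_pow (hR : 0 < R)
    (hcont : ContinuousOn u (closedBall x₀ R)) (hu : ContDiffOn ℝ 2 u (ball x₀ R))
    (hbd : ∀ z, ‖z - x₀‖ = R → u z = 0) (hlap : ∀ y ∈ ball x₀ R, lap u y = f y)
    (hx : x ∈ closedBall x₀ R) :
    volume (ball (0 : EuclideanSpace ℝ (Fin n)) (|u x| / (2 * R))) ≤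
      ∫⁻ y in ball x₀ R, ‖f y‖ₑ ^ n := by
  rcases abs_cases (u x) with ⟨h, -⟩ | ⟨h, -⟩
  · rw [h]
    exact volume_ball_le_setLIntegral_enorm_pow hR hcont hu hbd hlap hx
  · simpa only [h, enorm_neg] using volume_ball_le_setLIntegral_enorm_pow (u := fun z => -u z)
      (f := fun z => -f z) hR hcont.neg hu.neg (fun z hz => by simp [hbd z hz])
      (fun y hy => by rw [lap_neg, hlap y hy]) hx

end ABP

/-- Euclidean, classical-solution case of estimate (2.3) in the proof of Lemma 2.1:
the sup bound `sup_{B(x₀,R)} |u| ≤ C R^{2-n/p} ‖f‖_{L^p(B(x₀,R))}` for the solution of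
the Dirichlet problem `Δu = f` with zero boundary values, `f ∈ L^p`, `p > n`. -/
theorem dirichlet_sup_bound
    (n : ℕ) (hn : 1 ≤ n) (p : ℝ) (hp : (n : ℝ) < p) :
    ∃ C : ℝ, 0 < C ∧
      ∀ (x₀ : EuclideanSpace ℝ (Fin n)) (R : ℝ), 0 < R →
      ∀ (u f : EuclideanSpace ℝ (Fin n) → ℝ),
      ContinuousOn u (closedBall x₀ R) →
      ContDiffOn ℝ 2 u (ball x₀ R) →
      (∀ x : EuclideanSpace ℝ (Fin n), ‖x - x₀‖ = R → u x = 0) →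
      (∀ x ∈ ball x₀ R, lap u x = f x) →
      IntegrableOn (fun x => |f x| ^ p) (ball x₀ R) →
      ∀ x ∈ ball x₀ R,
        |u x| ≤ C * R ^ (2 - (n : ℝ) / p) *
          (∫ z in ball x₀ R, |f z| ^ p) ^ (1 / p) := by
  have : Nontrivial (EuclideanSpace ℝ (Fin n)) :=
    Module.nontrivial_of_finrank_pos (R := ℝ) (by rw [finrank_euclideanSpace_fin]; omega)
  set k := (volume (ball (0 : EuclideanSpace ℝ (Fin n)) 1)).toReal
  have hk : 0 < k := ENNReal.toReal_pos (measure_ball_pos _ _ one_pos).ne' measure_ball_lt_top.ne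
  have hvol (c : EuclideanSpace ℝ (Fin n)) {a : ℝ} (ha : 0 ≤ a) :
      volume (ball c a) = ENNReal.ofReal (a ^ n * k) := by
    rw [Measure.addHaar_ball _ _ ha, finrank_euclideanSpace_fin,
      ENNReal.ofReal_mul (by positivity), ENNReal.ofReal_toReal measure_ball_lt_top.ne]
  refine ⟨2 * k ^ (-(1 / p)), by positivity, fun x₀ R hR u f hcont hu hbd hlap hint x hx => ?_⟩
  have hf : AEStronglyMeasurable f (volume.restrict (ball x₀ R)) :=
    (measurable_lap u).aestronglyMeasurable.congr
      (ae_restrict_of_forall_mem measurableSet_ball hlap)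
  have key := (volume_ball_abs_le_setLIntegral_enorm_pow hR hcont hu hbd hlap
    (ball_subset_closedBall hx)).trans
    (setLIntegral_enorm_pow_le (by omega) hp.le measure_ball_lt_top.ne hf hint)
  rw [hvol 0 (by positivity), hvol x₀ hR.le, ENNReal.toReal_ofReal (by positivity),
    ENNReal.ofReal_le_ofReal_iff (by positivity)] at key
  exact le_of_div_pow_mul_le (by omega) (abs_nonneg _) hk hR
    (integral_nonneg fun _ => by positivity) key
end

section
/- Let n ≥ 1. There exist constants C₁, C₂ > 0, depending only on n, such that for all T and r with 0 < T < r³ < 1 and every x ∈ ℝⁿ, ∫₀^T ∫_{{y : r ≤ ‖y − x‖ ≤ 2r}} ‖∇_y p(t,x,y)‖² dy dt ≤ C₁ exp(−C₂ T^{−1/3}), where ‖∇_y p(t,x,y)‖² = (‖x − y‖²/(4t²)) (4πt)^{−n} exp(−‖x − y‖²/(2t)). -/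
/-!
On the annulus `ρ = ‖x - y‖ ≥ r > T^{1/3} ≥ t^{1/3}`, so `ρ²/t ≥ t^{-1/3} =: σ`. Hence, as `ρ ≤ 2`,
the integrand is at most `(4π)^{-n} t^{-(n+2)} e^{-σ/2} = (4π)^{-n} σ^{3(n+2)} e^{-σ/2}`, and
the polynomial factor is absorbed by half of the exponential: the integrand is `≲ e^{-σ/4}`,
which is `≤ e^{-T^{-1/3}/4}`. Integrating this uniform bound over a set of measure at most
`T · |B(0, 2)|` gives the estimate.
-/

open MeasureTheory Metric Set Real
open scoped Nat

lemma pow_mul_exp_neg_le_factorial (k : ℕ) {u : ℝ} (hu : 0 ≤ u) : u ^ k * exp (-u) ≤ k ! := by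
  have hk : (0 : ℝ) < k ! := by positivity
  have h := (div_le_iff₀ hk).mp (pow_div_factorial_le_exp (x := u) hu k)
  calc u ^ k * exp (-u) ≤ exp u * k ! * exp (-u) := by gcongr
    _ = k ! := by rw [mul_comm, ← mul_assoc, ← exp_add, neg_add_cancel, exp_zero, one_mul]

lemma pow_mul_exp_neg_half_le (k : ℕ) {s : ℝ} (hs : 0 ≤ s) :
    s ^ k * exp (-(s / 2)) ≤ k ! * 4 ^ k * exp (-(s / 4)) := by
  have h := pow_mul_exp_neg_le_factorial k (u := s / 4) (by positivity)
  calc s ^ k * exp (-(s / 2)) = 4 ^ k * ((s / 4) ^ k * exp (-(s / 4))) * exp (-(s / 4)) := by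
        rw [div_pow, mul_assoc, mul_assoc, ← exp_add]; field_simp; ring_nf
    _ ≤ 4 ^ k * k ! * exp (-(s / 4)) := by gcongr
    _ = k ! * 4 ^ k * exp (-(s / 4)) := by ring

lemma rpow_neg_one_third_le_sq_div {t ρ : ℝ} (ht : 0 < t) (hρ : 0 ≤ ρ) (htρ : t ≤ ρ ^ 3) :
    t ^ (-(1 : ℝ) / 3) ≤ ρ ^ 2 / t := by
  set a := t ^ ((3 : ℕ)⁻¹ : ℝ)
  have ha : 0 < a := rpow_pos_of_pos ht _
  have ha3 : a ^ 3 = t := rpow_inv_natCast_pow ht.le (by norm_num)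
  have haρ : a ≤ ρ := (pow_le_pow_iff_left₀ ha.le hρ (by norm_num)).mp (ha3 ▸ htρ)
  have hinv : t ^ (-(1 : ℝ) / 3) = a⁻¹ := by
    rw [neg_div, rpow_neg ht.le]; norm_num [a]
  rw [hinv, ← ha3, le_div_iff₀ (by positivity)]
  calc a⁻¹ * a ^ 3 = a ^ 2 := by field_simp
    _ ≤ ρ ^ 2 := by gcongr

/-- `‖∇_y p(t,x,y)‖²` as a function of `ρ = ‖x - y‖`. -/
noncomputable def heatKernelGradNormSq (n : ℕ) (t ρ : ℝ) : ℝ :=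
  ρ ^ 2 / (4 * t ^ 2) * (4 * π * t) ^ (-(n : ℝ)) * exp (-ρ ^ 2 / (2 * t))

lemma heatKernelGradNormSq_nonneg (n : ℕ) {t : ℝ} (ht : 0 < t) (ρ : ℝ) :
    0 ≤ heatKernelGradNormSq n t ρ := by
  unfold heatKernelGradNormSq; positivity

lemma heatKernelGradNormSq_le_of_le_two (n : ℕ) {t ρ : ℝ} (ht : 0 < t) (hρ : 0 ≤ ρ)
    (hρ2 : ρ ≤ 2) :
    heatKernelGradNormSq n t ρ ≤ ((4 * π) ^ n)⁻¹ * t⁻¹ ^ (n + 2) * exp (-(ρ ^ 2 / t) / 2) := by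
  have hρsq : ρ ^ 2 / 4 ≤ 1 := by rw [div_le_one (by norm_num)]; nlinarith
  have hpow : (4 * π * t) ^ (-(n : ℝ)) = ((4 * π) ^ n)⁻¹ * t⁻¹ ^ n := by
    rw [rpow_neg (by positivity), rpow_natCast, mul_pow, mul_inv, inv_pow]
  unfold heatKernelGradNormSq
  rw [hpow, show -ρ ^ 2 / (2 * t) = -(ρ ^ 2 / t) / 2 by ring]
  calc ρ ^ 2 / (4 * t ^ 2) * (((4 * π) ^ n)⁻¹ * t⁻¹ ^ n) * exp (-(ρ ^ 2 / t) / 2)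
      = ρ ^ 2 / 4 * (((4 * π) ^ n)⁻¹ * t⁻¹ ^ (n + 2)) * exp (-(ρ ^ 2 / t) / 2) := by
        rw [pow_add]; field_simp
    _ ≤ 1 * (((4 * π) ^ n)⁻¹ * t⁻¹ ^ (n + 2)) * exp (-(ρ ^ 2 / t) / 2) := by gcongr
    _ = _ := by ring

lemma exists_heatKernelGradNormSq_le (n : ℕ) :
    ∃ K > 0, ∀ T t ρ : ℝ, 0 < t → t ≤ T → T ≤ ρ ^ 3 → 0 ≤ ρ → ρ ≤ 2 →
      heatKernelGradNormSq n t ρ ≤ K * exp (-(1 / 4) * T ^ (-(1 : ℝ) / 3)) := by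
  refine ⟨((4 * π) ^ n)⁻¹ * ((3 * (n + 2)) ! * 4 ^ (3 * (n + 2))), by positivity, ?_⟩
  intro T t ρ ht htT hTρ hρ hρ2
  set σ := t ^ (-(1 : ℝ) / 3)
  have hσ : 0 ≤ σ := by positivity
  have hσ3 : σ ^ 3 = t⁻¹ := by
    rw [← rpow_natCast, ← rpow_mul ht.le]; norm_num [rpow_neg_one]
  have hσT : T ^ (-(1 : ℝ) / 3) ≤ σ := rpow_le_rpow_of_nonpos ht htT (by norm_num)
  calc heatKernelGradNormSq n t ρ
      ≤ ((4 * π) ^ n)⁻¹ * t⁻¹ ^ (n + 2) * exp (-(ρ ^ 2 / t) / 2) :=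
        heatKernelGradNormSq_le_of_le_two n ht hρ hρ2
    _ ≤ ((4 * π) ^ n)⁻¹ * (σ ^ (3 * (n + 2)) * exp (-(σ / 2))) := by
        rw [pow_mul, hσ3, mul_assoc, neg_div]
        gcongr
        exact rpow_neg_one_third_le_sq_div ht hρ (htT.trans hTρ)
    _ ≤ ((4 * π) ^ n)⁻¹ * ((3 * (n + 2)) ! * 4 ^ (3 * (n + 2)) * exp (-(σ / 4))) :=
        mul_le_mul_of_nonneg_left (pow_mul_exp_neg_half_le _ hσ) (by positivity)
    _ ≤ ((4 * π) ^ n)⁻¹ * ((3 * (n + 2)) ! * 4 ^ (3 * (n + 2)) *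
          exp (-(T ^ (-(1 : ℝ) / 3) / 4))) := by gcongr
    _ = _ := by ring_nf

lemma norm_setIntegral_setIntegral_le_of_norm_le_const {α β E : Type*} [MeasurableSpace α]
    [MeasurableSpace β] [NormedAddCommGroup E] [NormedSpace ℝ E] {μ : Measure α} {ν : Measure β}
    {s : Set α} {A : Set β} {f : α → β → E} {C : ℝ} (hs : μ s < ⊤) (hA : ν A < ⊤)
    (hC : ∀ t ∈ s, ∀ y ∈ A, ‖f t y‖ ≤ C) :
    ‖∫ t in s, ∫ y in A, f t y ∂ν ∂μ‖ ≤ C * ν.real A * μ.real s :=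
  norm_setIntegral_le_of_norm_le_const hs fun t ht ↦
    norm_setIntegral_le_of_norm_le_const hA (hC t ht)

theorem heat_kernel_gradient_annulus_estimate_general (n : ℕ) :
    ∃ C₁ : ℝ, 0 < C₁ ∧ ∃ C₂ : ℝ, 0 < C₂ ∧
      ∀ (T r : ℝ), 0 < T → T < r ^ 3 → r ^ 3 < 1 →
      ∀ x : EuclideanSpace ℝ (Fin n),
        ∫ t in Ioo (0 : ℝ) T,
          ∫ y in {y : EuclideanSpace ℝ (Fin n) | r ≤ ‖y - x‖ ∧ ‖y - x‖ ≤ 2 * r},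
            (‖x - y‖ ^ 2 / (4 * t ^ 2)) * (4 * Real.pi * t) ^ (-(n : ℝ)) *
              Real.exp (-‖x - y‖ ^ 2 / (2 * t))
        ≤ C₁ * Real.exp (-C₂ * T ^ (-(1 : ℝ) / 3)) := by
  obtain ⟨K, hK, hpointwise⟩ := exists_heatKernelGradNormSq_le n
  set V := volume.real (closedBall (0 : EuclideanSpace ℝ (Fin n)) 2)
  have hV : 0 < V := ENNReal.toReal_pos (measure_closedBall_pos _ _ two_pos).ne'
    measure_closedBall_lt_top.ne
  refine ⟨K * V, by positivity, 1 / 4, by norm_num, fun T r hT hTr hr3 x ↦ ?_⟩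
  set A := {y : EuclideanSpace ℝ (Fin n) | r ≤ ‖y - x‖ ∧ ‖y - x‖ ≤ 2 * r}
  have hr : 0 < r := (Odd.pow_pos_iff (by decide)).mp (hT.trans hTr)
  have hr1 : r < 1 := (pow_lt_one_iff_of_nonneg hr.le (by norm_num)).mp hr3
  have hA : A ⊆ closedBall x 2 := fun y hy ↦ by
    rw [mem_closedBall, dist_eq_norm]
    linarith [hy.2]
  have hAV : volume.real A ≤ V := (measureReal_mono hA measure_closedBall_lt_top.ne).trans_eq
    (Measure.addHaar_real_closedBall_center _ x 2)
  have hbound : ∀ t ∈ Ioo 0 T, ∀ y ∈ A,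
      ‖heatKernelGradNormSq n t ‖x - y‖‖ ≤ K * exp (-(1 / 4) * T ^ (-(1 : ℝ) / 3)) := by
    rintro t ⟨ht, htT⟩ y ⟨hry, hyr⟩
    rw [norm_sub_rev] at hry hyr
    rw [norm_of_nonneg (heatKernelGradNormSq_nonneg n ht _)]
    exact hpointwise T t _ ht htT.le (hTr.le.trans (by gcongr)) (norm_nonneg _) (by linarith)
  calc ∫ t in Ioo 0 T, ∫ y in A, heatKernelGradNormSq n t ‖x - y‖
      ≤ K * exp (-(1 / 4) * T ^ (-(1 : ℝ) / 3)) * volume.real A * volume.real (Ioo 0 T) :=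
        (le_norm_self _).trans <| norm_setIntegral_setIntegral_le_of_norm_le_const
          measure_Ioo_lt_top ((measure_mono hA).trans_lt measure_closedBall_lt_top) hbound
    _ ≤ K * exp (-(1 / 4) * T ^ (-(1 : ℝ) / 3)) * V * 1 := by
        rw [volume_real_Ioo_of_le hT.le, sub_zero]
        gcongr
        linarith
    _ = K * V * exp (-(1 / 4) * T ^ (-(1 : ℝ) / 3)) := by ring

/-- Euclidean case of Lemma 2.5: for `0 < T < r³ < 1`, the squared gradient of the
Gaussian heat kernel `p(t,x,y) = (4πt)^{-n/2} e^{-‖x-y‖²/(4t)}`, namely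
`‖∇_y p(t,x,y)‖² = (‖x-y‖²/(4t²)) (4πt)^{-n} e^{-‖x-y‖²/(2t)}`, integrated over
`t ∈ (0,T)` and over the annulus `r ≤ ‖y - x‖ ≤ 2r`, is bounded by `C₁ e^{-C₂ T^{-1/3}}`. -/
theorem heat_kernel_gradient_annulus_estimate (n : ℕ) (hn : 1 ≤ n) :
    ∃ C₁ : ℝ, 0 < C₁ ∧ ∃ C₂ : ℝ, 0 < C₂ ∧
      ∀ (T r : ℝ), 0 < T → T < r ^ 3 → r ^ 3 < 1 →
      ∀ x : EuclideanSpace ℝ (Fin n),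
        ∫ t in Ioo (0 : ℝ) T,
          ∫ y in {y : EuclideanSpace ℝ (Fin n) | r ≤ ‖y - x‖ ∧ ‖y - x‖ ≤ 2 * r},
            (‖x - y‖ ^ 2 / (4 * t ^ 2)) * (4 * Real.pi * t) ^ (-(n : ℝ)) *
              Real.exp (-‖x - y‖ ^ 2 / (2 * t))
        ≤ C₁ * Real.exp (-C₂ * T ^ (-(1 : ℝ) / 3)) :=
  heat_kernel_gradient_annulus_estimate_general n
end

section
/- Let n ≥ 1, let Ω ⊆ ℝⁿ be open, let u be locally integrable on Ω, and let M ≥ 0. Suppose that for every ball B(z,ρ) whose doubled ball B(z,2ρ) is contained in Ω one has the Poincaré-type bound ⨍_{B(z,ρ)} | u(x) − ⨍_{B(z,ρ)} u | dx ≤ M ρ, where ⨍ denotes the average over the ball. Then there exist a constant C, depending only on n, and a function v : Ω → ℝ with u = v almost everywhere on Ω, such that |v(x) − v(y)| ≤ C M ‖x − y‖ for all x, y ∈ B(y₀,r) whenever B(y₀,6r) ⊆ Ω. -/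
open MeasureTheory Metric Set Filter Topology Module
open scoped ENNReal

/-!
The representative is the limit of the ball averages `v x = lim_{ρ → 0} ⨍_{B(x,ρ)} u`. The
averages of `u` over a ball and over a ball inside it differ by at most the volume ratio times the
mean oscillation on the larger ball, so by the Poincaré bound the averages over `B(x, s)` and
`B(x, s/2)` differ by `2ⁿ M s`. Summing over the dyadic radii `s, s/2, s/4, …` shows that the
averages converge as `ρ → 0`, to a value within `2ⁿ⁺¹ M s` of `⨍_{B(x,s)} u`; by Lebesgue
differentiation the limit is `u x` for almost every `x`. For two points at distance `d`, the balls
`B(x, d/2)` and `B(y, d/2)` both lie in `B((x + y)/2, d)`, which links `v x` to `v y` at a cost of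
`2ⁿ⁺² M d`.
-/

section Averages

variable {α : Type*} [MeasurableSpace α] {μ : Measure α}

theorem abs_setAverage_sub_le {S T : Set α} {u : α → ℝ} (c : ℝ) (hST : S ⊆ T)
    (hS : μ S ≠ 0) (hT : μ T ≠ ∞) (hu : IntegrableOn u T μ) :
    |(⨍ x in S, u x ∂μ) - c| ≤ μ.real T / μ.real S * ⨍ x in T, |u x - c| ∂μ := by
  have hS' : μ S ≠ ∞ := ne_top_of_le_ne_top hT (measure_mono hST)
  have hSpos : 0 < μ.real S := ENNReal.toReal_pos hS hS'
  have huc : IntegrableOn (fun x => |u x - c|) T μ := (hu.sub (integrableOn_const hT)).abs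
  have hsub : (⨍ x in S, u x ∂μ) - c = (μ.real S)⁻¹ * ∫ x in S, (u x - c) ∂μ := by
    rw [integral_sub (hu.mono_set hST) (integrableOn_const hS'), setIntegral_const,
      setAverage_eq, smul_eq_mul, smul_eq_mul, mul_sub, inv_mul_cancel_left₀ hSpos.ne']
  calc |(⨍ x in S, u x ∂μ) - c|
      ≤ (μ.real S)⁻¹ * ∫ x in S, |u x - c| ∂μ := by
        rw [hsub, abs_mul, abs_of_pos (inv_pos.2 hSpos)]
        gcongr
        exact abs_integral_le_integral_abs
    _ ≤ (μ.real S)⁻¹ * ∫ x in T, |u x - c| ∂μ :=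
        mul_le_mul_of_nonneg_left
          (setIntegral_mono_set huc (.of_forall fun _ => abs_nonneg _) hST.eventuallyLE)
          (inv_nonneg.2 hSpos.le)
    _ = μ.real T / μ.real S * ⨍ x in T, |u x - c| ∂μ := by
        rw [← measure_smul_setAverage _ hT, smul_eq_mul]
        ring

end Averages

theorem abs_sub_le_two_mul_of_forall_le_two_mul {F : ℝ → ℝ} {K s₀ : ℝ} (hK : 0 ≤ K)
    (hF : ∀ s t, 0 < t → t ≤ s → s ≤ 2 * t → s ≤ s₀ → |F t - F s| ≤ K * s)
    {s t : ℝ} (ht : 0 < t) (hts : t ≤ s) (hs : s ≤ s₀) : |F t - F s| ≤ 2 * K * s := by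
  obtain ⟨k, hk⟩ := pow_unbounded_of_one_lt (s / t) one_lt_two
  rw [div_lt_iff₀ ht] at hk
  -- induction on the number `k` of halvings of `s` needed to reach `t`
  induction k generalizing s with
  | zero => simp only [pow_zero, one_mul] at hk; exact absurd hts hk.not_ge
  | succ k ih =>
    have hKs : 0 ≤ K * s := mul_nonneg hK (ht.le.trans hts)
    rcases le_or_gt s (2 * t) with hst | hst
    · linarith [hF s t ht hts hst hs]
    · have hhalf := ih (s := s / 2) (by linarith) (by linarith) (by rw [pow_succ] at hk; linarith)
      calc |F t - F s| ≤ |F t - F (s / 2)| + |F (s / 2) - F s| := abs_sub_le _ _ _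
        _ ≤ 2 * K * (s / 2) + K * s :=
          add_le_add hhalf (hF s (s / 2) (by linarith) (by linarith) (by linarith) hs)
        _ = 2 * K * s := by ring

theorem exists_tendsto_nhdsGT_of_abs_sub_le {F : ℝ → ℝ} {A s₀ : ℝ} (hs₀ : 0 < s₀)
    (hF : ∀ s t, 0 < t → t ≤ s → s ≤ s₀ → |F t - F s| ≤ A * s) :
    ∃ L, Tendsto F (𝓝[>] 0) (𝓝 L) ∧ ∀ s, 0 < s → s ≤ s₀ → |L - F s| ≤ A * s := by
  have hCauchy : Cauchy (map F (𝓝[>] 0)) := by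
    refine Metric.cauchy_iff.2 ⟨inferInstance, fun ε hε => ?_⟩
    have hsmall : ∀ᶠ δ in 𝓝[>] (0 : ℝ), δ ∈ Ioc 0 s₀ ∧ 2 * A * δ < ε := by
      have hlim : Tendsto (fun δ => 2 * A * δ) (𝓝[>] 0) (𝓝 0) := by
        simpa using ((continuous_const_mul (2 * A)).tendsto 0).mono_left nhdsWithin_le_nhds
      exact Filter.Eventually.and (Ioc_mem_nhdsGT hs₀) (hlim.eventually (gt_mem_nhds hε))
    obtain ⟨δ, ⟨hδ, hδs₀⟩, hδε⟩ := hsmall.exists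
    refine ⟨F '' Ioc 0 δ, image_mem_map (Ioc_mem_nhdsGT hδ), ?_⟩
    rintro _ ⟨t, ⟨ht, htδ⟩, rfl⟩ _ ⟨t', ⟨ht', ht'δ⟩, rfl⟩
    rw [Real.dist_eq]
    calc |F t - F t'| ≤ |F t - F δ| + |F t' - F δ| := by
          rw [abs_sub_comm (F t') (F δ)]; exact abs_sub_le _ _ _
      _ < ε := by linarith [hF δ t ht htδ hδs₀, hF δ t' ht' ht'δ hδs₀]
  obtain ⟨L, hL⟩ := cauchy_map_iff_exists_tendsto.1 hCauchy
  refine ⟨L, hL, fun s hs hss => le_of_tendsto (hL.sub_const (F s)).abs ?_⟩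
  filter_upwards [Ioc_mem_nhdsGT hs] with t ⟨ht, hts⟩ using hF s t ht hts hss

theorem MeasureTheory.LocallyIntegrableOn.integrableOn_ball {X F : Type*} [PseudoMetricSpace X]
    [ProperSpace X] [MeasurableSpace X] [NormedAddCommGroup F] {μ : Measure X} {Ω : Set X}
    {u : X → F} (hu : LocallyIntegrableOn u Ω μ) {x : X} {r : ℝ} (hr : closedBall x r ⊆ Ω) :
    IntegrableOn u (ball x r) μ :=
  (hu.integrableOn_compact_subset hr (isCompact_closedBall x r)).mono_set ball_subset_closedBall

theorem ae_restrict_of_forall_mem_ae_ball {X : Type*} [PseudoMetricSpace X]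
    [SecondCountableTopology X] [MeasurableSpace X] {μ : Measure X} {Ω : Set X} {p : X → Prop}
    (hΩ : MeasurableSet Ω) (h : ∀ x ∈ Ω, ∃ ε > 0, ∀ᵐ y ∂μ, y ∈ ball x ε → p y) :
    ∀ᵐ y ∂μ.restrict Ω, p y := by
  rw [ae_restrict_iff' hΩ, ae_iff]
  refine measure_null_of_locally_null _ fun x hx => ?_
  obtain ⟨ε, hε, hae⟩ := h x (Classical.not_imp.1 hx).1
  refine ⟨_, inter_mem_nhdsWithin _ (ball_mem_nhds x hε), measure_mono_null ?_ (ae_iff.1 hae)⟩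
  rintro y ⟨hy, hyx⟩ hp
  exact hy fun _ => hp hyx

theorem ball_midpoint_subset_ball {E : Type*} [NormedAddCommGroup E] [NormedSpace ℝ E]
    {x y y₀ : E} {r : ℝ} (hx : x ∈ ball y₀ r) (hy : y ∈ ball y₀ r) :
    ball (midpoint ℝ x y) (2 * dist x y) ⊆ ball y₀ (6 * r) := by
  have hxy : dist x y < 2 * r := by
    linarith [dist_triangle_right x y y₀, mem_ball.1 hx, mem_ball.1 hy]
  have hmx : dist (midpoint ℝ x y) x = dist x y / 2 := by
    rw [dist_midpoint_left, Real.norm_two]; ring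
  refine ball_subset_ball' ?_
  linarith [dist_triangle (midpoint ℝ x y) x y₀, mem_ball.1 hx]

section Haar

variable {E : Type*} [NormedAddCommGroup E] [NormedSpace ℝ E] [FiniteDimensional ℝ E]
  [MeasurableSpace E] [BorelSpace E] (μ : Measure E) [μ.IsAddHaarMeasure]

theorem measureReal_ball_div_measureReal_ball (z z' : E) {s t : ℝ} (hs : 0 < s) (ht : 0 < t) :
    μ.real (ball z s) / μ.real (ball z' t) = (s / t) ^ finrank ℝ E := by
  have hunit : (μ (ball (0 : E) 1)).toReal ≠ 0 :=
    (ENNReal.toReal_pos (measure_ball_pos μ 0 one_pos).ne' measure_ball_lt_top.ne).ne'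
  rw [measureReal_def, measureReal_def, Measure.addHaar_ball_of_pos μ _ hs,
    Measure.addHaar_ball_of_pos μ _ ht, ENNReal.toReal_mul, ENNReal.toReal_mul,
    ENNReal.toReal_ofReal (by positivity), ENNReal.toReal_ofReal (by positivity), div_pow]
  field_simp

theorem closedBall_ae_eq_ball (x : E) {r : ℝ} (hr : r ≠ 0) : closedBall x r =ᵐ[μ] ball x r := by
  refine ae_eq_set.2 ⟨?_, ?_⟩
  · rw [closedBall_sdiff_ball]
    exact Measure.addHaar_sphere_of_ne_zero μ x hr
  · rw [sdiff_eq_empty.2 ball_subset_closedBall, measure_empty]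

def HasLinearPoincareBound (Ω : Set E) (u : E → ℝ) (M : ℝ) : Prop :=
  ∀ (z : E) (ρ : ℝ), 0 < ρ → ball z (2 * ρ) ⊆ Ω →
    ⨍ x in ball z ρ, |u x - ⨍ y in ball z ρ, u y ∂μ| ∂μ ≤ M * ρ

/-- `limUnder` returns a junk value where the limit does not exist; inside `Ω` it always exists
under a Poincaré bound. -/
noncomputable def ballAverageLimit (u : E → ℝ) (x : E) : ℝ :=
  limUnder (𝓝[>] 0) fun ρ => ⨍ y in ball x ρ, u y ∂μ

variable {μ} {Ω : Set E} {u : E → ℝ} {M : ℝ}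

theorem ae_tendsto_ballAverage {F : Type*} [NormedAddCommGroup F] [NormedSpace ℝ F]
    [CompleteSpace F] {f : E → F} (hf : LocallyIntegrable f μ) :
    ∀ᵐ x ∂μ, Tendsto (fun ρ => ⨍ y in ball x ρ, f y ∂μ) (𝓝[>] 0) (𝓝 (f x)) := by
  filter_upwards [IsUnifLocDoublingMeasure.ae_tendsto_average μ hf 1] with x hx
  refine (hx (fun _ => x) id tendsto_id ?_).congr' ?_
  · filter_upwards [self_mem_nhdsWithin] with ρ hρ
    simpa using le_of_lt hρ
  · filter_upwards [self_mem_nhdsWithin] with ρ hρ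
    exact setAverage_congr (closedBall_ae_eq_ball μ x (ne_of_gt hρ))

theorem ae_restrict_tendsto_ballAverage (hΩ : IsOpen Ω) (hu : LocallyIntegrableOn u Ω μ) :
    ∀ᵐ x ∂μ.restrict Ω, Tendsto (fun ρ => ⨍ y in ball x ρ, u y ∂μ) (𝓝[>] 0) (𝓝 (u x)) := by
  refine ae_restrict_of_forall_mem_ae_ball hΩ.measurableSet fun x hx => ?_
  obtain ⟨ε, hε, hball⟩ := Metric.isOpen_iff.1 hΩ x hx
  -- Lebesgue differentiation needs `LocallyIntegrable`, so cut `u` off outside a ball in `Ω`.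
  have hint : Integrable ((closedBall x (ε / 2)).indicator u) μ :=
    (integrable_indicator_iff measurableSet_closedBall).2 <| hu.integrableOn_compact_subset
      ((closedBall_subset_ball (half_lt_self hε)).trans hball) (isCompact_closedBall _ _)
  refine ⟨ε / 2, half_pos hε, ?_⟩
  filter_upwards [ae_tendsto_ballAverage hint.locallyIntegrable] with y hy hyx
  have hnear : ∀ᶠ ρ in 𝓝[>] 0, ⨍ z in ball y ρ, (closedBall x (ε / 2)).indicator u z ∂μ
      = ⨍ z in ball y ρ, u z ∂μ := by
    filter_upwards [Ioo_mem_nhdsGT (sub_pos.2 (mem_ball.1 hyx))] with ρ hρ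
    refine setAverage_congr_fun measurableSet_ball (.of_forall fun z hz => indicator_of_mem ?_ u)
    exact ball_subset_closedBall (ball_subset_ball' (by linarith [hρ.2]) hz)
  rw [← indicator_of_mem (ball_subset_closedBall hyx) u]
  exact hy.congr' hnear

theorem ae_eq_ballAverageLimit (hΩ : IsOpen Ω) (hu : LocallyIntegrableOn u Ω μ) :
    u =ᵐ[μ.restrict Ω] ballAverageLimit μ u :=
  (ae_restrict_tendsto_ballAverage hΩ hu).mono fun _ hx => hx.limUnder_eq.symm

theorem HasLinearPoincareBound.abs_ballAverage_sub_le (hP : HasLinearPoincareBound μ Ω u M)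
    (hu : LocallyIntegrableOn u Ω μ) {z z' : E} {s t : ℝ} (ht : 0 < t)
    (hsub : ball z' t ⊆ ball z s) (hΩ : ball z (2 * s) ⊆ Ω) :
    |(⨍ y in ball z' t, u y ∂μ) - ⨍ y in ball z s, u y ∂μ|
      ≤ (s / t) ^ finrank ℝ E * (M * s) := by
  have hs : 0 < s := nonempty_ball.1 ((nonempty_ball.2 ht).mono hsub)
  have hint : IntegrableOn u (ball z s) μ :=
    hu.integrableOn_ball ((closedBall_subset_ball (by linarith)).trans hΩ)
  calc _ ≤ μ.real (ball z s) / μ.real (ball z' t) *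
          ⨍ x in ball z s, |u x - ⨍ y in ball z s, u y ∂μ| ∂μ :=
        abs_setAverage_sub_le _ hsub (measure_ball_pos μ z' ht).ne' measure_ball_lt_top.ne hint
    _ ≤ (s / t) ^ finrank ℝ E * (M * s) := by
        rw [measureReal_ball_div_measureReal_ball μ z z' hs ht]
        gcongr
        exact hP z s hs hΩ

theorem HasLinearPoincareBound.abs_ballAverage_sub_ballAverage_le
    (hP : HasLinearPoincareBound μ Ω u M) (hu : LocallyIntegrableOn u Ω μ) (hM : 0 ≤ M)
    {x : E} {s₀ : ℝ} (hΩ : ball x (2 * s₀) ⊆ Ω) {s t : ℝ} (ht : 0 < t) (hts : t ≤ s)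
    (hs : s ≤ s₀) :
    |(⨍ y in ball x t, u y ∂μ) - ⨍ y in ball x s, u y ∂μ|
      ≤ 2 * (2 ^ finrank ℝ E * M) * s := by
  refine abs_sub_le_two_mul_of_forall_le_two_mul (F := fun ρ => ⨍ y in ball x ρ, u y ∂μ)
    (by positivity) (fun s t ht hts hst hs => ?_) ht hts hs
  have hratio : (s / t) ^ finrank ℝ E ≤ 2 ^ finrank ℝ E :=
    pow_le_pow_left₀ (div_nonneg (ht.le.trans hts) ht.le)
      (div_le_of_le_mul₀ ht.le zero_le_two hst) _
  calc _ ≤ (s / t) ^ finrank ℝ E * (M * s) :=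
        hP.abs_ballAverage_sub_le hu ht (ball_subset_ball hts)
          ((ball_subset_ball (by linarith)).trans hΩ)
    _ ≤ 2 ^ finrank ℝ E * M * s := by
        rw [mul_assoc]
        gcongr
        exact mul_nonneg hM (ht.le.trans hts)

theorem HasLinearPoincareBound.abs_ballAverageLimit_sub_le
    (hP : HasLinearPoincareBound μ Ω u M) (hu : LocallyIntegrableOn u Ω μ) (hM : 0 ≤ M)
    {x : E} {s₀ : ℝ} (hΩ : ball x (2 * s₀) ⊆ Ω) {s : ℝ} (hs : 0 < s) (hss : s ≤ s₀) :
    |ballAverageLimit μ u x - ⨍ y in ball x s, u y ∂μ|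
      ≤ 2 * (2 ^ finrank ℝ E * M) * s := by
  obtain ⟨L, hL, hLs⟩ := exists_tendsto_nhdsGT_of_abs_sub_le (hs.trans_le hss)
    fun s t ht hts hs => hP.abs_ballAverage_sub_ballAverage_le hu hM hΩ ht hts hs
  rw [ballAverageLimit, hL.limUnder_eq]
  exact hLs s hs hss

theorem HasLinearPoincareBound.abs_ballAverageLimit_sub_ballAverageLimit_le
    (hP : HasLinearPoincareBound μ Ω u M) (hu : LocallyIntegrableOn u Ω μ) (hM : 0 ≤ M)
    {x y : E} (hΩ : ball (midpoint ℝ x y) (2 * dist x y) ⊆ Ω) :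
    |ballAverageLimit μ u x - ballAverageLimit μ u y|
      ≤ 4 * 2 ^ finrank ℝ E * M * dist x y := by
  rcases eq_or_ne x y with rfl | hxy
  · simp
  set m := midpoint ℝ x y
  set d := dist x y
  have hd : 0 < d := dist_pos.2 hxy
  have hend : ∀ w, dist w m = d / 2 →
      |ballAverageLimit μ u w - ⨍ z in ball m d, u z ∂μ| ≤ 2 * 2 ^ finrank ℝ E * M * d := by
    intro w hw
    have hlim := hP.abs_ballAverageLimit_sub_le hu hM (s₀ := d / 2)
      ((ball_subset_ball' (x := w) (by linarith)).trans hΩ) (half_pos hd) le_rfl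
    have hstep := hP.abs_ballAverage_sub_le hu (half_pos hd)
      (ball_subset_ball' (by linarith) : ball w (d / 2) ⊆ ball m d) hΩ
    rw [div_div_cancel₀ hd.ne'] at hstep
    calc _ ≤ |ballAverageLimit μ u w - ⨍ z in ball w (d / 2), u z ∂μ|
          + |(⨍ z in ball w (d / 2), u z ∂μ) - ⨍ z in ball m d, u z ∂μ| := abs_sub_le _ _ _
      _ ≤ _ := add_le_add hlim hstep
      _ = 2 * 2 ^ finrank ℝ E * M * d := by ring
  have hx := hend x (by rw [dist_left_midpoint, Real.norm_two]; ring)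
  have hy := hend y (by rw [dist_right_midpoint, Real.norm_two]; ring)
  calc _ ≤ |ballAverageLimit μ u x - ⨍ z in ball m d, u z ∂μ|
        + |ballAverageLimit μ u y - ⨍ z in ball m d, u z ∂μ| := by
          rw [abs_sub_comm (ballAverageLimit μ u y)]; exact abs_sub_le _ _ _
    _ ≤ _ := by linarith

end Haar

theorem poincare_bound_implies_lipschitz_representative_general (n : ℕ) :
    ∃ C : ℝ, 0 < C ∧
      ∀ (Ω : Set (EuclideanSpace ℝ (Fin n))), IsOpen Ω →
      ∀ u : EuclideanSpace ℝ (Fin n) → ℝ, LocallyIntegrableOn u Ω →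
      ∀ M : ℝ, 0 ≤ M →
      (∀ (z : EuclideanSpace ℝ (Fin n)) (ρ : ℝ), 0 < ρ → ball z (2 * ρ) ⊆ Ω →
        ⨍ x in ball z ρ, |u x - ⨍ y in ball z ρ, u y| ≤ M * ρ) →
      ∃ v : EuclideanSpace ℝ (Fin n) → ℝ,
        (∀ᵐ x ∂(volume.restrict Ω), u x = v x) ∧
        ∀ (y₀ : EuclideanSpace ℝ (Fin n)) (r : ℝ), ball y₀ (6 * r) ⊆ Ω →
          ∀ x ∈ ball y₀ r, ∀ y ∈ ball y₀ r, |v x - v y| ≤ C * M * ‖x - y‖ := by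
  refine ⟨4 * 2 ^ n, by positivity, fun Ω hΩ u hu M hM hP => ?_⟩
  refine ⟨ballAverageLimit volume u, ae_eq_ballAverageLimit hΩ hu, fun y₀ r h6 x hx y hy => ?_⟩
  have hlip := HasLinearPoincareBound.abs_ballAverageLimit_sub_ballAverageLimit_le hP hu hM
    ((ball_midpoint_subset_ball hx hy).trans h6)
  rwa [finrank_euclideanSpace_fin, dist_eq_norm] at hlip

/-- The chain-of-balls argument at the end of the proof of Theorem 1.2: if a locally
integrable `u` on an open `Ω ⊆ ℝⁿ` satisfies the linear Poincaré-type bound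
`⨍_{B(z,ρ)} |u − u_{B(z,ρ)}| ≤ M ρ` on every ball with `B(z,2ρ) ⊆ Ω`, then `u` has a
representative `v` with `|v(x) − v(y)| ≤ C M ‖x − y‖` on `B(y₀,r)` whenever
`B(y₀,6r) ⊆ Ω`, where `C` depends only on `n`. -/
theorem poincare_bound_implies_lipschitz_representative (n : ℕ) (hn : 1 ≤ n) :
    ∃ C : ℝ, 0 < C ∧
      ∀ (Ω : Set (EuclideanSpace ℝ (Fin n))), IsOpen Ω →
      ∀ u : EuclideanSpace ℝ (Fin n) → ℝ, LocallyIntegrableOn u Ω →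
      ∀ M : ℝ, 0 ≤ M →
      (∀ (z : EuclideanSpace ℝ (Fin n)) (ρ : ℝ), 0 < ρ → ball z (2 * ρ) ⊆ Ω →
        ⨍ x in ball z ρ, |u x - ⨍ y in ball z ρ, u y| ≤ M * ρ) →
      ∃ v : EuclideanSpace ℝ (Fin n) → ℝ,
        (∀ᵐ x ∂(volume.restrict Ω), u x = v x) ∧
        ∀ (y₀ : EuclideanSpace ℝ (Fin n)) (r : ℝ), ball y₀ (6 * r) ⊆ Ω →
          ∀ x ∈ ball y₀ r, ∀ y ∈ ball y₀ r, |v x - v y| ≤ C * M * ‖x - y‖ :=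
  poincare_bound_implies_lipschitz_representative_general n
end
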